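/- arXiv:1303.5114 — 6 statements merged into one kernel-verified Lean document; each statement's English description precedes it below -/
import Mathlib

section
/- Let M be an n×n complex matrix such that t²•I + M² is invertible for every real t ≥ 0 and such that t ↦ (t²•I + M²)⁻¹ is integrable on [0,∞). Let ξ be an eigenvector of M with eigenvalue λ. If Re λ > 0 then ((2/π) • M * ∫₀^∞ (t²•I + M²)⁻¹ dt) applied to ξ equals ξ, and if Re λ < 0 then it equals −ξ. -/
/-!
On an eigenvector `ξ` of `M` with eigenvalue `λ`, the integrand `(t² I + M²)⁻¹` acts as the scalar
`(t² + λ²)⁻¹`, so everything reduces to `∫₀^∞ dt / (t² + λ²) = π / (2λ)` for `Re λ > 0`; the case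
`Re λ < 0` follows by replacing `λ` with `-λ`. Writing `t² + λ² = t² - a²` with `a = iλ` in the
upper half-plane, `(2a)⁻¹ (log (t - a) - log (t + a))` is an antiderivative on all of `ℝ`, since
`t ± a` never meets the branch cut of `log`; it tends to `0` at `∞` and equals `-π i / (2a)` at `0`.
-/

open MeasureTheory Real Filter Topology
open scoped Matrix

attribute [local instance] Matrix.normedAddCommGroup Matrix.normedSpace

namespace Complex

lemma hasDerivAt_log_ofReal_add {c : ℂ} (hc : c.im ≠ 0) (t : ℝ) :
    HasDerivAt (fun s : ℝ => log (s + c)) (t + c)⁻¹ t := by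
  have hslit : (t + c : ℂ) ∈ slitPlane := mem_slitPlane_iff.2 (Or.inr (by simpa using hc))
  simpa using ((hasDerivAt_id t).ofReal_comp.add_const c).clog_real hslit

lemma tendsto_log_ofReal_add_sub_log (c : ℂ) :
    Tendsto (fun t : ℝ => log (t + c) - log t) atTop (𝓝 0) := by
  have hquot : Tendsto (fun t : ℝ => 1 + c / t) atTop (𝓝 1) := by
    simpa [div_eq_mul_inv] using tendsto_const_nhds.add
      ((continuous_ofReal.tendsto 0).comp tendsto_inv_atTop_zero |>.const_mul c)
  have hlog : Tendsto (fun t : ℝ => log (1 + c / t)) atTop (𝓝 0) := by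
    simpa [Function.comp_def] using (continuousAt_clog (by simp [slitPlane])).tendsto.comp hquot
  refine hlog.congr' ?_
  filter_upwards [eventually_gt_atTop 0, hquot.eventually_ne one_ne_zero] with t ht hne
  have ht' : (t : ℂ) ≠ 0 := ofReal_ne_zero.2 ht.ne'
  rw [show (t + c : ℂ) = t * (1 + c / t) by field_simp, log_ofReal_mul ht hne, ← ofReal_log ht.le]
  ring

lemma log_neg_of_im_pos {a : ℂ} (ha : 0 < a.im) : log (-a) = log a - π * I := by
  rw [log, log, norm_neg, arg_neg_eq_arg_sub_pi_of_im_pos ha]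
  push_cast; ring

lemma integral_Ioi_inv_sq_sub_sq {a : ℂ} (ha : 0 < a.im)
    (hint : IntegrableOn (fun t : ℝ => ((t : ℂ) ^ 2 - a ^ 2)⁻¹) (Set.Ioi 0)) :
    ∫ t in Set.Ioi (0 : ℝ), ((t : ℂ) ^ 2 - a ^ 2)⁻¹ = π * I / (2 * a) := by
  have ha0 : a ≠ 0 := fun h => by simp [h] at ha
  have hderiv (t : ℝ) : HasDerivAt (fun s : ℝ => (2 * a)⁻¹ * (log (s + -a) - log (s + a)))
      ((t : ℂ) ^ 2 - a ^ 2)⁻¹ t := by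
    have hsub : (t + -a : ℂ) ≠ 0 := fun h => by simpa [ha.ne'] using congrArg im h
    have hadd : (t + a : ℂ) ≠ 0 := fun h => by simpa [ha.ne'] using congrArg im h
    refine (((hasDerivAt_log_ofReal_add (c := -a) (by simpa using ha.ne') t).sub
      (hasDerivAt_log_ofReal_add ha.ne' t)).const_mul (2 * a)⁻¹).congr_deriv ?_
    rw [show (t : ℂ) ^ 2 - a ^ 2 = (t + -a) * (t + a) by ring]
    field_simp
    ring
  have hlim : Tendsto (fun s : ℝ => (2 * a)⁻¹ * (log (s + -a) - log (s + a))) atTop (𝓝 0) := by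
    simpa using ((tendsto_log_ofReal_add_sub_log (-a)).sub
      (tendsto_log_ofReal_add_sub_log a)).const_mul (2 * a)⁻¹
  rw [integral_Ioi_of_hasDerivAt_of_tendsto' (fun t _ => hderiv t) hint hlim]
  simp only [ofReal_zero, zero_add, log_neg_of_im_pos ha]
  field_simp
  ring

lemma integral_Ioi_inv_sq_add_sq {lam : ℂ} (hlam : 0 < lam.re)
    (hint : IntegrableOn (fun t : ℝ => ((t : ℂ) ^ 2 + lam ^ 2)⁻¹) (Set.Ioi 0)) :
    ∫ t in Set.Ioi (0 : ℝ), ((t : ℂ) ^ 2 + lam ^ 2)⁻¹ = π / (2 * lam) := by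
  have hsq : ∀ t : ℂ, t ^ 2 + lam ^ 2 = t ^ 2 - (I * lam) ^ 2 := fun t => by
    linear_combination lam ^ 2 * I_sq
  simp only [hsq] at hint ⊢
  rw [integral_Ioi_inv_sq_sub_sq (by simpa using hlam) hint]
  have : lam ≠ 0 := fun h => by simp [h] at hlam
  field_simp

end Complex

namespace Matrix

variable {α m n 𝕜 : Type*} [RCLike 𝕜] [Fintype m] [Fintype n] [MeasurableSpace α]
  {μ : Measure α} {f : α → Matrix m n 𝕜}

def mulVecCLM (v : n → 𝕜) : Matrix m n 𝕜 →L[𝕜] (m → 𝕜) :=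
  LinearMap.toContinuousLinearMap ((mulVecBilin 𝕜 𝕜).flip v)

-- The norm topology on matrices is not reducibly the product topology, so the `ContinuousENorm`
-- instance behind `Integrable` has to be named explicitly.
theorem integrable_mulVec_const
    (hf : @Integrable _ _ SeminormedAddGroup.toContinuousENorm _ _ f μ) (v : n → 𝕜) :
    Integrable (fun x => f x *ᵥ v) μ :=
  (mulVecCLM v).integrable_comp hf

theorem integral_mulVec
    (hf : @Integrable _ _ SeminormedAddGroup.toContinuousENorm _ _ f μ) (v : n → 𝕜) :
    (∫ x, f x ∂μ) *ᵥ v = ∫ x, f x *ᵥ v ∂μ :=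
  ((mulVecCLM v).integral_comp_comm hf).symm

theorem inv_mulVec_eq_inv_smul {ι K : Type*} [Field K] [Fintype ι] [DecidableEq ι]
    {A : Matrix ι ι K} (hA : IsUnit A) {ξ : ι → K} (hξ : ξ ≠ 0) {c : K}
    (h : A *ᵥ ξ = c • ξ) : A⁻¹ *ᵥ ξ = c⁻¹ • ξ := by
  have hback : c • (A⁻¹ *ᵥ ξ) = ξ := by
    rw [← mulVec_smul, ← h, mulVec_mulVec, nonsing_inv_mul _ ((isUnit_iff_isUnit_det A).1 hA),
      one_mulVec]
  have hc : c ≠ 0 := by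
    rintro rfl
    exact hξ (by simpa using hback.symm)
  exact (eq_inv_smul_iff₀ hc).2 hback

theorem smul_one_add_mul_self_mulVec {ι K : Type*} [CommRing K] [Fintype ι] [DecidableEq ι]
    {M : Matrix ι ι K} {ξ : ι → K} {lam : K} (hev : M *ᵥ ξ = lam • ξ) (s : K) :
    (s • (1 : Matrix ι ι K) + M * M) *ᵥ ξ = (s + lam ^ 2) • ξ := by
  rw [add_mulVec, smul_mulVec, one_mulVec, ← mulVec_mulVec, hev, mulVec_smul, hev, smul_smul,
    add_smul, sq]

end Matrix

open Matrix in
theorem integral_inv_sq_smul_one_add_mul_self_mulVec {ι : Type*} [Fintype ι] [DecidableEq ι]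
    {M : Matrix ι ι ℂ} (hinv : ∀ t : ℝ, 0 ≤ t → IsUnit (((t : ℂ) ^ 2) • (1 : Matrix ι ι ℂ) + M * M))
    (hint : @IntegrableOn _ _ _ _ SeminormedAddGroup.toContinuousENorm
      (fun t : ℝ => (((t : ℂ) ^ 2) • (1 : Matrix ι ι ℂ) + M * M)⁻¹) (Set.Ici (0 : ℝ)) volume)
    {ξ : ι → ℂ} (hξ : ξ ≠ 0) {lam : ℂ} (hev : M *ᵥ ξ = lam • ξ) :
    IntegrableOn (fun t : ℝ => ((t : ℂ) ^ 2 + lam ^ 2)⁻¹) (Set.Ioi 0) ∧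
      (∫ t in Set.Ici (0 : ℝ), (((t : ℂ) ^ 2) • (1 : Matrix ι ι ℂ) + M * M)⁻¹) *ᵥ ξ =
        (∫ t in Set.Ioi (0 : ℝ), ((t : ℂ) ^ 2 + lam ^ 2)⁻¹) • ξ := by
  have heq : Set.EqOn (fun t : ℝ => (((t : ℂ) ^ 2) • (1 : Matrix ι ι ℂ) + M * M)⁻¹ *ᵥ ξ)
      (fun t => ((t : ℂ) ^ 2 + lam ^ 2)⁻¹ • ξ) (Set.Ici 0) := fun t ht =>
    inv_mulVec_eq_inv_smul (hinv t ht) hξ (smul_one_add_mul_self_mulVec hev _)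
  have hvec : IntegrableOn (fun t : ℝ => ((t : ℂ) ^ 2 + lam ^ 2)⁻¹ • ξ) (Set.Ici 0) :=
    IntegrableOn.congr_fun (integrable_mulVec_const hint ξ) heq measurableSet_Ici
  refine ⟨IntegrableOn.mono_set ((integrable_smul_const hξ).1 hvec) Set.Ioi_subset_Ici_self, ?_⟩
  rw [integral_mulVec hint, setIntegral_congr_fun measurableSet_Ici heq, integral_smul_const,
    integral_Ici_eq_integral_Ioi]

/-- The integral representation `(2/π) M ∫₀^∞ (t²I + M²)⁻¹ dt` of the matrix sign
function acts as `+1` on eigenvectors of `M` whose eigenvalue has positive real part,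
and as `-1` on those whose eigenvalue has negative real part. -/
theorem stmt_1 {n : ℕ} (M : Matrix (Fin n) (Fin n) ℂ)
    (hinv : ∀ t : ℝ, 0 ≤ t →
      IsUnit (((t : ℂ) ^ 2) • (1 : Matrix (Fin n) (Fin n) ℂ) + M * M))
    (hint : @IntegrableOn _ _ _ _ SeminormedAddGroup.toContinuousENorm
      (fun t : ℝ => (((t : ℂ) ^ 2) • (1 : Matrix (Fin n) (Fin n) ℂ) + M * M)⁻¹)
      (Set.Ici (0 : ℝ)) volume)
    (ξ : Fin n → ℂ) (hξ : ξ ≠ 0) (lam : ℂ) (hev : M.mulVec ξ = lam • ξ) :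
    (0 < lam.re →
      (((2 / π : ℂ)) • (M * ∫ t in Set.Ici (0 : ℝ),
        (((t : ℂ) ^ 2) • (1 : Matrix (Fin n) (Fin n) ℂ) + M * M)⁻¹)).mulVec ξ = ξ) ∧
    (lam.re < 0 →
      (((2 / π : ℂ)) • (M * ∫ t in Set.Ici (0 : ℝ),
        (((t : ℂ) ^ 2) • (1 : Matrix (Fin n) (Fin n) ℂ) + M * M)⁻¹)).mulVec ξ = -ξ) := by
  obtain ⟨hscalar, hmulVec⟩ := integral_inv_sq_smul_one_add_mul_self_mulVec hinv hint hξ hev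
  simp only [Matrix.smul_mulVec, ← Matrix.mulVec_mulVec, hmulVec, Matrix.mulVec_smul, hev,
    smul_smul]
  refine ⟨fun hpos => ?_, fun hneg => ?_⟩
  · have hlam : lam ≠ 0 := fun h => by simp [h] at hpos
    rw [Complex.integral_Ioi_inv_sq_add_sq hpos hscalar]
    convert one_smul ℂ ξ
    field_simp
  · have hlam : lam ≠ 0 := fun h => by simp [h] at hneg
    rw [← neg_sq lam, Complex.integral_Ioi_inv_sq_add_sq (by simpa using hneg)
      (by simpa using hscalar)]
    convert neg_one_smul ℂ ξ
    field_simp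
end

section
/- Let M be an n×n complex matrix whose spectrum is disjoint from the imaginary axis (every eigenvalue μ satisfies Re μ ≠ 0), and assume t ↦ (t²•I + M²)⁻¹ is integrable on [0,∞). Then the two integral representations of the matrix sign function agree: (1/π) ∫₀^π (cos θ • I − i sin θ • M)⁻¹ * (cos θ • M − i sin θ • I) dθ = (2/π) • M * ∫₀^∞ (t²•I + M²)⁻¹ dt. -/
/-!
Put `θ = π/2 ∓ φ` and `t = tan φ`. Away from `cos φ = 0` the scalar `cos φ` cancels from both
factors, so `M_{π/2 ∓ φ} = (±t I - iM)⁻¹ (±t M - iI)`, and `dφ = dt / (1 + t²)`. The two reflected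
terms add up to `2 (1 + t²) M (t² I + M²)⁻¹`, because `(t I - iM)(-t I - iM) = -(t² I + M²)` and
all factors are polynomials in `M`. The spectral hypothesis makes `cos θ I - i sin θ M`
invertible for every `θ`, so the angular integrand is continuous on `[0, π]`.
-/

open MeasureTheory Real

attribute [local instance] Matrix.normedAddCommGroup Matrix.normedSpace

open Complex (I)

theorem intervalIntegral.integral_sub_add_eq_integral_add {E : Type*} [NormedAddCommGroup E]
    [NormedSpace ℝ E] {f : ℝ → E} {c r : ℝ} (hf : IntervalIntegrable f volume (c - r) (c + r)) :
    ∫ x in c - r..c + r, f x = ∫ x in 0..r, (f (c - x) + f (c + x)) := by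
  have hc : c ∈ Set.uIcc (c - r) (c + r) := by
    rcases le_total 0 r with h | h <;> simp [Set.mem_uIcc, h]
  have hleft : IntervalIntegrable f volume (c - r) c := hf.mono_set (Set.uIcc_subset_uIcc_left hc)
  have hright : IntervalIntegrable f volume c (c + r) :=
    hf.mono_set (Set.uIcc_subset_uIcc_right hc)
  rw [intervalIntegral.integral_add, intervalIntegral.integral_comp_sub_left,
    intervalIntegral.integral_comp_add_left, sub_zero, add_zero,
    intervalIntegral.integral_add_adjacent_intervals hleft hright]
  · simpa using (hleft.comp_sub_left c).symm
  · simpa using hright.comp_add_left c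

theorem integral_Ioi_eq_integral_tan {E : Type*} [NormedAddCommGroup E] [NormedSpace ℝ E]
    (g : ℝ → E) :
    ∫ t in Set.Ioi 0, g t = ∫ φ in Set.Ioo 0 (π / 2), (1 + tan φ ^ 2) • g (tan φ) := by
  have hcos : ∀ φ ∈ Set.Ioo 0 (π / 2), 0 < cos φ := fun φ hφ =>
    cos_pos_of_mem_Ioo ⟨by linarith [hφ.1, pi_pos], hφ.2⟩
  have himage : tan '' Set.Ioo 0 (π / 2) = Set.Ioi 0 := by
    ext t
    refine ⟨?_, fun ht => ⟨arctan t, ⟨?_, arctan_lt_pi_div_two t⟩, tan_arctan t⟩⟩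
    · rintro ⟨φ, hφ, rfl⟩
      exact tan_pos_of_pos_of_lt_pi_div_two hφ.1 hφ.2
    · simpa using arctan_strictMono (Set.mem_Ioi.mp ht)
  have hinj : Set.InjOn tan (Set.Ioo 0 (π / 2)) :=
    injOn_tan.mono (Set.Ioo_subset_Ioo_left (by linarith [pi_pos]))
  rw [← himage, integral_image_eq_integral_abs_deriv_smul measurableSet_Ioo
    (fun φ hφ => (hasDerivAt_tan (hcos φ hφ).ne').hasDerivWithinAt) hinj]
  refine setIntegral_congr_fun measurableSet_Ioo fun φ hφ => ?_
  rw [abs_of_pos (by have := hcos φ hφ; positivity), ← inv_inv (1 + tan φ ^ 2),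
    inv_one_add_tan_sq (hcos φ hφ).ne', one_div]

theorem isUnit_ofReal_smul_one_sub_I_mul_smul {A : Type*} [Ring A] [Algebra ℂ A] {x : A}
    (hx : ∀ μ ∈ spectrum ℂ x, μ.re ≠ 0) {a b : ℝ} (hab : a ≠ 0 ∨ b ≠ 0) :
    IsUnit ((a : ℂ) • (1 : A) - (I * b) • x) := by
  rcases eq_or_ne b 0 with rfl | hb
  · have ha : (a : ℂ) ≠ 0 := by simpa using hab
    simpa [Algebra.algebraMap_eq_smul_one] using (isUnit_iff_ne_zero.mpr ha).map (algebraMap ℂ A)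
  · have hIb : I * b ≠ 0 := by simp [hb]
    have hμ : (a / (I * b) : ℂ) ∉ spectrum ℂ x := fun h => hx _ h (by simp [Complex.div_re])
    have hfactor : (a : ℂ) • (1 : A) - (I * b) • x
        = algebraMap ℂ A (I * b) * (algebraMap ℂ A (a / (I * b)) - x) := by
      rw [Algebra.algebraMap_eq_smul_one, Algebra.algebraMap_eq_smul_one, mul_sub, smul_mul_smul,
        one_mul, mul_div_cancel₀ _ hIb, smul_mul_assoc, one_mul]
    rw [hfactor]
    exact ((isUnit_iff_ne_zero.mpr hIb).map _).mul (spectrum.notMem_iff.mp hμ)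

theorem Matrix.inv_smul_mul_smul {ι K : Type*} [Fintype ι] [DecidableEq ι] [Field K] {c : K}
    (hc : c ≠ 0) (A B : Matrix ι ι K) : (c • A)⁻¹ * (c • B) = A⁻¹ * B := by
  by_cases hA : IsUnit A.det
  · rw [show c • A = Units.mk0 c hc • A from rfl, Matrix.inv_smul' A _ hA, Units.smul_def,
      smul_mul_smul, Units.val_inv_eq_inv_val, Units.val_mk0, inv_mul_cancel₀ hc, one_smul]
  · have hcA : ¬IsUnit (c • A).det := by
      rwa [Matrix.det_smul, IsUnit.mul_iff, not_and_or, or_iff_right]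
      exact not_not.mpr ((isUnit_iff_ne_zero.mpr hc).pow _)
    rw [Matrix.nonsing_inv_apply_not_isUnit _ hA, Matrix.nonsing_inv_apply_not_isUnit _ hcA,
      zero_mul, zero_mul]

namespace MatrixSign

variable {ι : Type*} [Fintype ι] [DecidableEq ι]

/-- The paper's `M_θ`: the Möbius rotation `z ↦ (z cos θ - i sin θ) / (cos θ - i z sin θ)` of the
Riemann sphere, which fixes `±1`, applied to `M`. -/
noncomputable def rotation (M : Matrix ι ι ℂ) (θ : ℝ) : Matrix ι ι ℂ :=
  ((cos θ : ℂ) • (1 : Matrix ι ι ℂ) - (I * sin θ) • M)⁻¹ * ((cos θ : ℂ) • M - (I * sin θ) • 1)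

noncomputable def rotationCot (M : Matrix ι ι ℂ) (t : ℝ) : Matrix ι ι ℂ :=
  ((t : ℂ) • (1 : Matrix ι ι ℂ) - I • M)⁻¹ * ((t : ℂ) • M - I • 1)

variable {M : Matrix ι ι ℂ}

theorem continuous_rotation (hM : ∀ μ ∈ spectrum ℂ M, μ.re ≠ 0) : Continuous (rotation M) := by
  refine Continuous.mul (continuous_iff_continuousAt.2 fun θ => ?_) (by fun_prop)
  have hdet : ((cos θ : ℂ) • (1 : Matrix ι ι ℂ) - (I * sin θ) • M).det ≠ 0 := by
    refine ((Matrix.isUnit_iff_isUnit_det _).mp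
      (isUnit_ofReal_smul_one_sub_I_mul_smul hM ?_)).ne_zero
    by_contra! h
    simpa [h.1, h.2] using sin_sq_add_cos_sq θ
  refine (continuousAt_matrix_inv _ ?_).comp (by fun_prop)
  simpa only [Ring.inverse_eq_inv'] using continuousAt_inv₀ hdet

theorem rotation_pi_div_two_sub {φ : ℝ} (hφ : cos φ ≠ 0) :
    rotation M (π / 2 - φ) = rotationCot M (tan φ) := by
  have hsin : (sin φ : ℂ) = cos φ * tan φ := by
    rw [← Complex.ofReal_mul, tan_eq_sin_div_cos, mul_div_cancel₀ _ hφ]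
  have hcos : (cos φ : ℂ) ≠ 0 := by exact_mod_cast hφ
  rw [rotation, rotationCot, cos_pi_div_two_sub, sin_pi_div_two_sub, hsin,
    ← Matrix.inv_smul_mul_smul hcos ((tan φ : ℂ) • 1 - I • M)]
  congr 2 <;> module

theorem rotationCot_add_rotationCot_neg (hM : ∀ μ ∈ spectrum ℂ M, μ.re ≠ 0) (t : ℝ) :
    rotationCot M t + rotationCot M (-t)
      = (2 * (1 + (t : ℂ) ^ 2)) • (M * ((t : ℂ) ^ 2 • (1 : Matrix ι ι ℂ) + M * M)⁻¹) := by
  set T : Matrix ι ι ℂ := (t : ℂ) ^ 2 • 1 + M * M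
  set U : Matrix ι ι ℂ := (t : ℂ) • 1 - I • M
  set U' : Matrix ι ι ℂ := ((-t : ℝ) : ℂ) • 1 - I • M
  have hU : IsUnit U.det := (Matrix.isUnit_iff_isUnit_det U).mp <| by
    simpa [U] using isUnit_ofReal_smul_one_sub_I_mul_smul hM (a := t) (b := 1) (by simp)
  have hU' : IsUnit U'.det := (Matrix.isUnit_iff_isUnit_det U').mp <| by
    simpa [U'] using isUnit_ofReal_smul_one_sub_I_mul_smul hM (a := -t) (b := 1) (by simp)
  have hUU' : U * U' = -T := by
    simp only [U, U', T, sub_mul, mul_sub, one_mul, mul_one, smul_mul_assoc, mul_smul_comm]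
    push_cast
    linear_combination (norm := module) Complex.I_sq • (M * M)
  have hU'U : U' * U = -T := by
    simp only [U, U', T, sub_mul, mul_sub, one_mul, mul_one, smul_mul_assoc, mul_smul_comm]
    push_cast
    linear_combination (norm := module) Complex.I_sq • (M * M)
  have hsum : U' * ((t : ℂ) • M - I • 1) + U * (((-t : ℝ) : ℂ) • M - I • 1)
      = -(2 * (1 + (t : ℂ) ^ 2)) • M := by
    simp only [U, U', sub_mul, mul_sub, one_mul, mul_one, smul_mul_assoc, mul_smul_comm]
    push_cast
    linear_combination (norm := module) (2 : ℂ) • Complex.I_sq • M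
  have hTM : T * M = M * T := by
    simp only [T, add_mul, mul_add, smul_mul_assoc, mul_smul_comm, one_mul, mul_one, mul_assoc]
  have hT : IsUnit (-T) := hUU' ▸ ((Matrix.isUnit_iff_isUnit_det U).mpr hU).mul
    ((Matrix.isUnit_iff_isUnit_det U').mpr hU')
  have hTdet : IsUnit T.det := (Matrix.isUnit_iff_isUnit_det T).mp (by simpa using hT)
  refine hT.mul_left_cancel ?_
  calc -T * (rotationCot M t + rotationCot M (-t))
      = (U' * U) * (U⁻¹ * ((t : ℂ) • M - I • 1))
        + (U * U') * (U'⁻¹ * (((-t : ℝ) : ℂ) • M - I • 1)) := by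
        rw [hU'U, hUU', mul_add]; rfl
    _ = -(2 * (1 + (t : ℂ) ^ 2)) • M := by
        rw [mul_assoc U', Matrix.mul_nonsing_inv_cancel_left U _ hU, mul_assoc U,
          Matrix.mul_nonsing_inv_cancel_left U' _ hU', hsum]
    _ = -T * ((2 * (1 + (t : ℂ) ^ 2)) • (M * T⁻¹)) := by
        rw [mul_smul_comm, ← mul_assoc, neg_mul, hTM, neg_mul, mul_assoc,
          Matrix.mul_nonsing_inv _ hTdet, mul_one, smul_neg, neg_smul]

theorem rotation_pi_div_two_sub_add_rotation_pi_div_two_add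
    (hM : ∀ μ ∈ spectrum ℂ M, μ.re ≠ 0) {φ : ℝ} (hφ : cos φ ≠ 0) :
    rotation M (π / 2 - φ) + rotation M (π / 2 + φ)
      = (2 : ℂ) • ((1 + tan φ ^ 2) • (M * ((tan φ : ℂ) ^ 2 • (1 : Matrix ι ι ℂ) + M * M)⁻¹)) := by
  rw [show π / 2 + φ = π / 2 - -φ by ring, rotation_pi_div_two_sub hφ,
    rotation_pi_div_two_sub (by rwa [cos_neg]), tan_neg, rotationCot_add_rotationCot_neg hM,
    ← Complex.coe_smul, smul_smul, Complex.ofReal_add, Complex.ofReal_one, Complex.ofReal_pow]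

end MatrixSign

/-- For a complex square matrix `M` whose spectrum avoids the imaginary axis, the
angular-average integral representation of the matrix sign function agrees with the
half-line integral representation:
`(1/π) ∫₀^π (cos θ I − i sin θ M)⁻¹ (cos θ M − i sin θ I) dθ
  = (2/π) M ∫₀^∞ (t² I + M²)⁻¹ dt`. -/
theorem stmt_2 {n : ℕ} (M : Matrix (Fin n) (Fin n) ℂ)
    (hspec : ∀ μ ∈ spectrum ℂ M, μ.re ≠ 0)
    (hint : @IntegrableOn _ _ _ _ SeminormedAddGroup.toContinuousENorm
      (fun t : ℝ => (((t : ℂ) ^ 2) • (1 : Matrix (Fin n) (Fin n) ℂ) + M * M)⁻¹)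
      (Set.Ici (0 : ℝ)) volume) :
    (1 / π : ℂ) • (∫ θ in (0 : ℝ)..π,
        ((Real.cos θ : ℂ) • (1 : Matrix (Fin n) (Fin n) ℂ)
            - (Complex.I * Real.sin θ) • M)⁻¹
          * ((Real.cos θ : ℂ) • M
            - (Complex.I * Real.sin θ) • (1 : Matrix (Fin n) (Fin n) ℂ)))
      = (2 / π : ℂ) • (M * ∫ t in Set.Ici (0 : ℝ),
          (((t : ℂ) ^ 2) • (1 : Matrix (Fin n) (Fin n) ℂ) + M * M)⁻¹) := by
  have hfold : ∫ θ in (0 : ℝ)..π, MatrixSign.rotation M θ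
      = ∫ φ in Set.Ioo 0 (π / 2),
          (MatrixSign.rotation M (π / 2 - φ) + MatrixSign.rotation M (π / 2 + φ)) := by
    rw [← integral_Ioc_eq_integral_Ioo, ← intervalIntegral.integral_of_le pi_div_two_pos.le,
      ← intervalIntegral.integral_sub_add_eq_integral_add, sub_self, add_halves]
    exact (MatrixSign.continuous_rotation hspec).intervalIntegrable _ _
  have hpull : M * ∫ t in Set.Ici (0 : ℝ), ((t : ℂ) ^ 2 • (1 : Matrix (Fin n) (Fin n) ℂ) + M * M)⁻¹
      = ∫ t in Set.Ioi (0 : ℝ), M * ((t : ℂ) ^ 2 • (1 : Matrix (Fin n) (Fin n) ℂ) + M * M)⁻¹ := by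
    rw [← integral_Ici_eq_integral_Ioi]
    exact ((LinearMap.mulLeft ℂ M).toContinuousLinearMap.integral_comp_comm hint).symm
  change (1 / π : ℂ) • ∫ θ in (0 : ℝ)..π, MatrixSign.rotation M θ = _
  rw [hfold, setIntegral_congr_fun measurableSet_Ioo fun φ hφ =>
      MatrixSign.rotation_pi_div_two_sub_add_rotation_pi_div_two_add hspec
        (cos_pos_of_mem_Ioo ⟨by linarith [hφ.1, pi_pos], hφ.2⟩).ne',
    integral_smul, ← integral_Ioi_eq_integral_tan fun t : ℝ ↦
      M * ((t : ℂ) ^ 2 • (1 : Matrix (Fin n) (Fin n) ℂ) + M * M)⁻¹, hpull, smul_smul]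
  congr 1
  ring
end

section
/- Let M be an n×n complex matrix and θ₀ ∈ ℝ such that cos θ₀ • I − i sin θ₀ • M is invertible. Then the matrix-valued function θ ↦ M_θ := (cos θ • I − i sin θ • M)⁻¹ * (cos θ • M − i sin θ • I) is differentiable at θ₀ with derivative i • (M_{θ₀}² − I). -/
attribute [local instance] Matrix.normedAddCommGroup Matrix.normedSpace

/-!
Write `A θ = cos θ • 1 - i sin θ • M` and `B θ = cos θ • M - i sin θ • 1`. Differentiating swaps
the two pencils: `A' = -i B` and `B' = -i A`. With `(A⁻¹)' = -A⁻¹ A' A⁻¹` and the product rule,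
`(A⁻¹ B)' = i A⁻¹ B A⁻¹ B - i A⁻¹ A = i ((A⁻¹ B)² - 1)`.
-/

open Topology

section MatrixCalculus

variable {𝕜 : Type*} [NontriviallyNormedField 𝕜] {x : 𝕜}

theorem HasDerivAt.matrix_mul {m n p 𝔸 : Type*} [Fintype m] [Fintype n] [Fintype p]
    [NormedRing 𝔸] [NormedAlgebra 𝕜 𝔸] {f : 𝕜 → Matrix m n 𝔸} {g : 𝕜 → Matrix n p 𝔸}
    {f' : Matrix m n 𝔸} {g' : Matrix n p 𝔸} (hf : HasDerivAt f f' x) (hg : HasDerivAt g g' x) :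
    HasDerivAt (fun t => f t * g t) (f' * g x + f x * g') x := by
  refine hasDerivAt_pi.2 fun i => hasDerivAt_pi.2 fun j => ?_
  have hentry (k : n) : HasDerivAt (fun t => f t i k * g t k j)
      (f' i k * g x k j + f x i k * g' k j) x :=
    (hasDerivAt_pi.1 (hasDerivAt_pi.1 hf i) k).mul (hasDerivAt_pi.1 (hasDerivAt_pi.1 hg k) j)
  simpa only [Matrix.add_apply, Matrix.mul_apply, Finset.sum_add_distrib] using
    HasDerivAt.fun_sum (u := Finset.univ) fun k _ => hentry k

theorem HasDerivAt.matrix_inv {n 𝕂 : Type*} [Fintype n] [DecidableEq n]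
    [NormedField 𝕂] [NormedAlgebra 𝕜 𝕂] {A : 𝕜 → Matrix n n 𝕂} {A' : Matrix n n 𝕂}
    (hA : HasDerivAt A A' x) (hx : IsUnit (A x)) :
    HasDerivAt (fun t => (A t)⁻¹) (-((A x)⁻¹ * A' * (A x)⁻¹)) x := by
  have hdet : (A x).det ≠ 0 := ((Matrix.isUnit_iff_isUnit_det _).1 hx).ne_zero
  have hAcont : ContinuousAt A x := hA.continuousAt
  have hunit : ∀ᶠ t in 𝓝 x, IsUnit (A t) :=
    ((continuous_id.matrix_det.continuousAt.comp hAcont).eventually_ne hdet).mono fun t ht =>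
      (Matrix.isUnit_iff_isUnit_det _).2 (isUnit_iff_ne_zero.2 ht)
  have hinv : ContinuousAt (fun t => (A t)⁻¹) x :=
    (continuousAt_matrix_inv _ (by simpa [Ring.inverse_eq_inv'] using continuousAt_inv₀ hdet)).comp
      hAcont
  have hslope : ∀ᶠ t in 𝓝[≠] x,
      -((A t)⁻¹ * slope A x t * (A x)⁻¹) = slope (fun t => (A t)⁻¹) x t := by
    filter_upwards [nhdsWithin_le_nhds hunit] with t ht
    rw [slope_def_module, slope_def_module, Matrix.inv_sub_inv (iff_of_true ht hx),
      Matrix.mul_smul, Matrix.smul_mul, ← neg_sub (A t), Matrix.mul_neg, Matrix.neg_mul, smul_neg]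
  have hA_slope := hasDerivAt_iff_tendsto_slope.1 hA
  exact hasDerivAt_iff_tendsto_slope.2 <|
    (((hinv.mono_left nhdsWithin_le_nhds).mul hA_slope).mul_const _).neg.congr' hslope

theorem hasDerivAt_matrix_inv_mul_riccati {n 𝕂 : Type*} [Fintype n] [DecidableEq n]
    [NormedField 𝕂] [NormedAlgebra 𝕜 𝕂] {A B : 𝕜 → Matrix n n 𝕂} {c : 𝕂}
    (hA : HasDerivAt A (-(c • B x)) x) (hB : HasDerivAt B (-(c • A x)) x) (hx : IsUnit (A x)) :
    HasDerivAt (fun t => (A t)⁻¹ * B t) (c • (((A x)⁻¹ * B x) ^ 2 - 1)) x := by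
  convert (hA.matrix_inv hx).matrix_mul hB using 1
  have hinv_mul : (A x)⁻¹ * A x = 1 :=
    (A x).nonsing_inv_mul ((Matrix.isUnit_iff_isUnit_det _).1 hx)
  simp only [Matrix.mul_neg, Matrix.neg_mul, neg_neg, Matrix.mul_smul, Matrix.smul_mul, hinv_mul,
    sq, Matrix.mul_assoc]
  module

end MatrixCalculus

theorem hasDerivAt_cos_smul_sub_I_mul_sin_smul {E : Type*} [NormedAddCommGroup E]
    [NormedSpace ℂ E] (P Q : E) (θ : ℝ) :
    HasDerivAt (fun θ : ℝ => (Real.cos θ : ℂ) • P - (Complex.I * Real.sin θ) • Q)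
      (-(Complex.I • ((Real.cos θ : ℂ) • Q - (Complex.I * Real.sin θ) • P))) θ := by
  have hcos : HasDerivAt (fun θ : ℝ => (Real.cos θ : ℂ)) (-(Real.sin θ : ℂ)) θ := by
    simpa using (Real.hasDerivAt_cos θ).ofReal_comp
  have hsin : HasDerivAt (fun θ : ℝ => Complex.I * Real.sin θ) (Complex.I * Real.cos θ) θ :=
    (Real.hasDerivAt_sin θ).ofReal_comp.const_mul Complex.I
  refine ((hcos.smul_const P).sub (hsin.smul_const Q)).congr_deriv ?_
  rw [smul_sub, smul_smul, smul_smul, ← mul_assoc, Complex.I_mul_I]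
  module

/-- The family `M_θ = (cos θ I − i sin θ M)⁻¹ (cos θ M − i sin θ I)` satisfies the
differential identity `dM_θ/dθ = i (M_θ² − I)` at any point `θ₀` where
`cos θ₀ I − i sin θ₀ M` is invertible. -/
theorem stmt_3 {n : ℕ} (M : Matrix (Fin n) (Fin n) ℂ) (θ₀ : ℝ)
    (hinv : IsUnit ((Real.cos θ₀ : ℂ) • (1 : Matrix (Fin n) (Fin n) ℂ)
      - (Complex.I * Real.sin θ₀) • M)) :
    HasDerivAt
      (fun θ : ℝ =>
        ((Real.cos θ : ℂ) • (1 : Matrix (Fin n) (Fin n) ℂ)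
            - (Complex.I * Real.sin θ) • M)⁻¹
          * ((Real.cos θ : ℂ) • M
            - (Complex.I * Real.sin θ) • (1 : Matrix (Fin n) (Fin n) ℂ)))
      (Complex.I •
        ((((Real.cos θ₀ : ℂ) • (1 : Matrix (Fin n) (Fin n) ℂ)
              - (Complex.I * Real.sin θ₀) • M)⁻¹
            * ((Real.cos θ₀ : ℂ) • M
              - (Complex.I * Real.sin θ₀) • (1 : Matrix (Fin n) (Fin n) ℂ))) ^ 2
          - 1))
      θ₀ :=
  hasDerivAt_matrix_inv_mul_riccati (hasDerivAt_cos_smul_sub_I_mul_sin_smul 1 M θ₀)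
    (hasDerivAt_cos_smul_sub_I_mul_sin_smul M 1 θ₀) hinv
end

section
/- Let X, Y be 2n×2n complex matrices with X − Y invertible, let J be the 2n×2n block matrix with blocks 0, I on the top row and −I, 0 on the bottom row, and set N := (X − Y)⁻¹ * J * (X + Y). For θ ∈ ℝ write E_θ := cos θ • I + sin θ • J and E_{−θ} := cos θ • I − sin θ • J. If E_θ X − E_{−θ} Y is invertible, then cos θ • I + sin θ • N is invertible and (cos θ • I + sin θ • N)⁻¹ * (cos θ • N − sin θ • I) = (E_θ X − E_{−θ} Y)⁻¹ * J * (E_θ X + E_{−θ} Y). -/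
open Matrix

/-!
Multiplying by `X - Y` on the left clears the inverse in `N`: with `E_{±θ} = cos θ ± sin θ J`,
`(X - Y)(cos θ + sin θ N) = E_θ X - E_{-θ} Y` and, because `J² = -1`,
`(X - Y)(cos θ N - sin θ) = J (E_θ X + E_{-θ} Y)`. Cancelling the common left factor `X - Y`
gives the factored form of the Möbius transform.
-/

section Algebra

variable {K R : Type*} [CommRing K] [Ring R] [Algebra K R]

theorem sub_mul_smul_one_add_smul {X Y J N : R} (hN : (X - Y) * N = J * (X + Y)) (c s : K) :
    (X - Y) * (c • 1 + s • N) = (c • 1 + s • J) * X - (c • 1 - s • J) * Y := by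
  rw [mul_add, mul_smul_comm, mul_smul_comm, hN, mul_one]
  simp only [add_mul, sub_mul, smul_mul_assoc, one_mul, mul_add, smul_add, smul_sub]
  abel

theorem sub_mul_smul_sub_smul_one {X Y J N : R} (hJ : J * J = -1)
    (hN : (X - Y) * N = J * (X + Y)) (c s : K) :
    (X - Y) * (c • N - s • 1) = J * ((c • 1 + s • J) * X + (c • 1 - s • J) * Y) := by
  rw [mul_sub, mul_smul_comm, mul_smul_comm, hN, mul_one]
  simp only [add_mul, sub_mul, smul_mul_assoc, mul_add, mul_sub, mul_smul_comm, ← mul_assoc,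
    hJ, one_mul, neg_mul, smul_add, smul_sub, smul_neg]
  abel

end Algebra

theorem fromBlocks_zero_one_neg_one_zero_mul_self {n K : Type*} [Fintype n] [DecidableEq n]
    [CommRing K] :
    fromBlocks 0 1 (-1) 0 * fromBlocks 0 1 (-1) 0 = (-1 : Matrix (n ⊕ n) (n ⊕ n) K) := by
  simp [fromBlocks_multiply, ← fromBlocks_one, fromBlocks_neg]

theorem Matrix.isUnit_and_inv_mul_eq_of_mul_eq {n K : Type*} [Fintype n] [DecidableEq n]
    [CommRing K] {A T U M V : Matrix n n K} (hA : IsUnit A) (hM : IsUnit M)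
    (hT : A * T = M) (hU : A * U = V) :
    IsUnit T ∧ T⁻¹ * U = M⁻¹ * V := by
  have hA' := (isUnit_iff_isUnit_det A).mp hA
  have hT' : T = A⁻¹ * M := by rw [← hT, nonsing_inv_mul_cancel_left _ _ hA']
  refine ⟨hT' ▸ (isUnit_nonsing_inv_iff.mpr hA).mul hM, ?_⟩
  rw [hT', mul_inv_rev, nonsing_inv_nonsing_inv A hA', mul_assoc, hU]

/-- Given a factorization `N = (X − Y)⁻¹ J (X + Y)` with `J = [[0, I], [−I, 0]]`, the
Möbius-type transform `(cos θ I + sin θ N)⁻¹ (cos θ N − sin θ I)` has the same factored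
form with `X`, `Y` replaced by `E_θ X` and `E_{−θ} Y`, where `E_θ = cos θ I + sin θ J`. -/
theorem stmt_6 {n : ℕ}
    (X Y : Matrix (Sum (Fin n) (Fin n)) (Sum (Fin n) (Fin n)) ℂ)
    (hXY : IsUnit (X - Y)) (θ : ℝ) :
    let J : Matrix (Sum (Fin n) (Fin n)) (Sum (Fin n) (Fin n)) ℂ :=
      Matrix.fromBlocks 0 1 (-1) 0
    let N := (X - Y)⁻¹ * J * (X + Y)
    let Eθ := (Real.cos θ : ℂ) • (1 : Matrix (Sum (Fin n) (Fin n)) (Sum (Fin n) (Fin n)) ℂ)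
      + (Real.sin θ : ℂ) • J
    let Eθ' := (Real.cos θ : ℂ) • (1 : Matrix (Sum (Fin n) (Fin n)) (Sum (Fin n) (Fin n)) ℂ)
      - (Real.sin θ : ℂ) • J
    IsUnit (Eθ * X - Eθ' * Y) →
      IsUnit ((Real.cos θ : ℂ) • (1 : Matrix (Sum (Fin n) (Fin n)) (Sum (Fin n) (Fin n)) ℂ)
          + (Real.sin θ : ℂ) • N) ∧
      ((Real.cos θ : ℂ) • (1 : Matrix (Sum (Fin n) (Fin n)) (Sum (Fin n) (Fin n)) ℂ)
            + (Real.sin θ : ℂ) • N)⁻¹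
          * ((Real.cos θ : ℂ) • N
            - (Real.sin θ : ℂ) • (1 : Matrix (Sum (Fin n) (Fin n)) (Sum (Fin n) (Fin n)) ℂ))
        = (Eθ * X - Eθ' * Y)⁻¹ * J * (Eθ * X + Eθ' * Y) := by
  intro J N Eθ Eθ' hM
  have hN : (X - Y) * N = J * (X + Y) := by
    rw [show N = (X - Y)⁻¹ * (J * (X + Y)) from mul_assoc _ _ _,
      mul_nonsing_inv_cancel_left _ _ ((isUnit_iff_isUnit_det _).mp hXY)]
  rw [mul_assoc]
  exact isUnit_and_inv_mul_eq_of_mul_eq hXY hM (sub_mul_smul_one_add_smul hN _ _)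
    (sub_mul_smul_sub_smul_one fromBlocks_zero_one_neg_one_zero_mul_self hN _ _)
end

section
/- Let A₁, A₂, L₁, L₂ be n×n complex matrices, let Γ be the 2n×2n block matrix with blocks A₁, A₂ on the top row and L₁, L₂ on the bottom row, and let K be the 2n×2n block matrix with zero diagonal blocks and identity off-diagonal blocks. If Γᵀ * K * Γ = I, then Γ * D * Γᵀ * K = I − 2 • F, where D is the block-diagonal matrix diag(−I, I) and F is the block matrix with blocks A₁*L₁ᵀ, A₁*A₁ᵀ on the top row and L₁*L₁ᵀ, L₁*A₁ᵀ on the bottom row. -/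
/-!
`Γᵀ K Γ = I` says that `ΓᵀK` is a left, hence two-sided, inverse of `Γ`. Writing
`diag(−I, I) = I − 2P` with `P` the projection onto the first block, the left-hand side becomes
`Γ Γ⁻¹ − 2 Γ P Γᵀ K = I − 2 Γ P Γᵀ K`, and `Γ P Γᵀ K` only involves the decaying columns
`(A₁, L₁)` of `Γ`, with the column blocks swapped by `K`.
-/

open Matrix

namespace Matrix

variable {R m k l : Type*}

theorem fromBlocks_neg_one_zero_zero_one [Ring R] [DecidableEq k] [DecidableEq l] :
    fromBlocks (-1 : Matrix k k R) 0 0 (1 : Matrix l l R) = 1 - 2 • fromBlocks 1 0 0 0 := by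
  rw [← fromBlocks_one, fromBlocks_smul, sub_eq_add_neg, fromBlocks_neg, fromBlocks_add]
  congr 1 <;> module

theorem fromBlocks_mul_fromBlocks_one_mul_transpose_mul_swap [Fintype m] [Fintype k]
    [Fintype l] [DecidableEq m] [DecidableEq k] [Semiring R]
    (A₁ : Matrix m k R) (A₂ : Matrix m l R) (L₁ : Matrix m k R) (L₂ : Matrix m l R) :
    fromBlocks A₁ A₂ L₁ L₂ * fromBlocks (1 : Matrix k k R) 0 0 (0 : Matrix l l R) *
        (fromBlocks A₁ A₂ L₁ L₂)ᵀ * fromBlocks (0 : Matrix m m R) 1 1 0 =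
      fromBlocks (A₁ * L₁ᵀ) (A₁ * A₁ᵀ) (L₁ * L₁ᵀ) (L₁ * A₁ᵀ) := by
  simp [fromBlocks_multiply, fromBlocks_transpose]

end Matrix

/-- Spectral decomposition of the matrix sign function in the Barnett–Lothe formalism:
if `Γ = [[A₁, A₂], [L₁, L₂]]` satisfies `Γᵀ K Γ = I` with `K = [[0, I], [I, 0]]`, then
`Γ diag(−I, I) Γᵀ K = I − 2 [[A₁L₁ᵀ, A₁A₁ᵀ], [L₁L₁ᵀ, L₁A₁ᵀ]]`. -/
theorem stmt_15 {n : ℕ} (A₁ A₂ L₁ L₂ : Matrix (Fin n) (Fin n) ℂ) :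
    let Γ := Matrix.fromBlocks A₁ A₂ L₁ L₂
    let K : Matrix (Sum (Fin n) (Fin n)) (Sum (Fin n) (Fin n)) ℂ :=
      Matrix.fromBlocks 0 1 1 0
    let D : Matrix (Sum (Fin n) (Fin n)) (Sum (Fin n) (Fin n)) ℂ :=
      Matrix.fromBlocks (-1) 0 0 1
    let F := Matrix.fromBlocks (A₁ * L₁ᵀ) (A₁ * A₁ᵀ) (L₁ * L₁ᵀ) (L₁ * A₁ᵀ)
    Γᵀ * K * Γ = 1 → Γ * D * Γᵀ * K = 1 - 2 • F := by
  intro Γ K D F hΓ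
  have hΓ_inv : Γ * (Γᵀ * K) = 1 := mul_eq_one_comm.mp hΓ
  have hD : D = 1 - 2 • fromBlocks 1 0 0 0 := fromBlocks_neg_one_zero_zero_one
  have hF : Γ * fromBlocks 1 0 0 0 * Γᵀ * K = F :=
    fromBlocks_mul_fromBlocks_one_mul_transpose_mul_swap A₁ A₂ L₁ L₂
  calc Γ * D * Γᵀ * K
      = Γ * (1 - 2 • fromBlocks 1 0 0 0) * Γᵀ * K := by rw [hD]
    _ = Γ * (Γᵀ * K) - 2 • (Γ * fromBlocks 1 0 0 0 * Γᵀ * K) := by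
        simp only [Matrix.mul_sub, Matrix.sub_mul, Matrix.mul_smul, Matrix.smul_mul,
          Matrix.mul_one, Matrix.mul_assoc]
    _ = 1 - 2 • F := by rw [hΓ_inv, hF]
end

section
/- Let S, Q, B, Z, R be n×n complex matrices with Q invertible, and suppose that i • (fromBlocks S Q B Sᵀ) * (fromBlocks (−I) I (i•Z) 0) = (fromBlocks (−I) I (i•Z) 0) * (fromBlocks (−I) R 0 I), where fromBlocks W X Y V denotes the 2n×2n block matrix with blocks W, X on the top row and Y, V on the bottom row. Then R = I − i•S, Z = −Q⁻¹*(I + i•S), B = (I + i•Sᵀ)*Z, and B = Z*(I − i•S). -/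
/-!
Multiplying out the block products and comparing the four blocks gives four linear matrix
equations. Using `i² = -1`, the top row yields `R = 1 - iS` and `QZ = -(1 + iS)`, whence the
formula for `Z` as `Q` is invertible; the bottom row yields `B = (1 + iSᵀ)Z` and, after
cancelling the unit `i`, `B = ZR = Z(1 - iS)`.
-/

open Matrix

namespace Matrix

variable {m 𝕜 : Type*} [Fintype m] [DecidableEq m] [CommRing 𝕜]

theorem block_eqs_of_smul_fromBlocks_mul_eq {i : 𝕜} {S Q B P Z R : Matrix m m 𝕜}
    (h : i • (fromBlocks S Q B P * fromBlocks (-1) 1 (i • Z) 0)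
      = fromBlocks (-1) 1 (i • Z) 0 * fromBlocks (-1) R 0 1) :
    i • (i • (Q * Z) - S) = 1 ∧ i • S = 1 - R ∧
      i • (i • (P * Z) - B) = -(i • Z) ∧ i • B = i • (Z * R) := by
  simp only [fromBlocks_multiply, fromBlocks_smul, fromBlocks_inj] at h
  obtain ⟨h₁₁, h₁₂, h₂₁, h₂₂⟩ := h
  refine ⟨?_, ?_, ?_, ?_⟩
  · simpa [sub_eq_neg_add] using h₁₁
  · simpa [neg_add_eq_sub] using h₁₂
  · simpa [sub_eq_neg_add] using h₂₁
  · simpa using h₂₂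

end Matrix

/-- Block-matrix content of the Riccati-equation lemma: if
`i [[S, Q], [B, Sᵀ]] · [[−I, I], [iZ, 0]] = [[−I, I], [iZ, 0]] · [[−I, R], [0, I]]`
with `Q` invertible, then `R = I − iS`, `Z = −Q⁻¹(I + iS)`, `B = (I + iSᵀ)Z` and
`B = Z(I − iS)`. -/
theorem stmt_16 {n : ℕ} (S Q B Z R : Matrix (Fin n) (Fin n) ℂ)
    (hQ : IsUnit Q)
    (h : Complex.I • (Matrix.fromBlocks S Q B Sᵀ
          * Matrix.fromBlocks (-1) 1 (Complex.I • Z) 0)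
        = Matrix.fromBlocks (-1) 1 (Complex.I • Z) 0
          * Matrix.fromBlocks (-1) R 0 1) :
    R = 1 - Complex.I • S ∧
    Z = -(Q⁻¹ * (1 + Complex.I • S)) ∧
    B = (1 + Complex.I • Sᵀ) * Z ∧
    B = Z * (1 - Complex.I • S) := by
  obtain ⟨h₁₁, h₁₂, h₂₁, h₂₂⟩ := block_eqs_of_smul_fromBlocks_mul_eq h
  have hi : Complex.I * Complex.I = -1 := Complex.I_mul_I
  have hR : R = 1 - Complex.I • S := by rw [h₁₂, sub_sub_cancel]
  have hQZ : Q * Z = -(1 + Complex.I • S) := by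
    simp only [smul_sub, smul_smul, hi, neg_one_smul] at h₁₁
    linear_combination (norm := module) -h₁₁
  have hZ : Z = -(Q⁻¹ * (1 + Complex.I • S)) := by
    rw [← neg_eq_iff_eq_neg.mpr hQZ, Matrix.mul_neg, neg_neg,
      nonsing_inv_mul_cancel_left Q Z ((isUnit_iff_isUnit_det Q).mp hQ)]
  have hB : B = (1 + Complex.I • Sᵀ) * Z := by
    have := congrArg (Complex.I • ·) h₂₁
    simp only [smul_sub, smul_neg, smul_smul, hi, neg_one_smul] at this
    rw [add_mul, one_mul, smul_mul]
    linear_combination (norm := module) this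
  have hB' : B = Z * R := (isUnit_iff_ne_zero.mpr Complex.I_ne_zero).smul_left_cancel.mp h₂₂
  exact ⟨hR, hZ, hB, hR ▸ hB'⟩
end
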